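/- Let u solve (1/2)σ² u''(y) − θ y u'(y) = −1 on (a, b) with u(a) = u(b) = 0 (a < b, σ > 0, θ > 0). Then u(y) > 0 for all y ∈ (a, b). -/

import Mathlib

/-!
Maximum principle: at an interior minimum `c` of `u` we have `u'(c) = 0`, so the equation forces
`σ² u''(c) = -2 < 0`; by the second-derivative test `c` is then also a local maximum, so `u` is
locally constant at `c` and `u''(c) = 0`, a contradiction. Hence the minimum of `u` on `[a, b]`
is attained only at the endpoints, where `u` vanishes.
-/

open Set Filter Topology

theorem IsLocalMin.deriv_deriv_nonneg {f : ℝ → ℝ} {x₀ : ℝ} (hmin : IsLocalMin f x₀)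
    (hc : ContinuousAt f x₀) : 0 ≤ deriv (deriv f) x₀ := by
  by_contra! hneg
  have hmax : IsLocalMax f x₀ := isLocalMax_of_deriv_deriv_neg hneg hmin.deriv_eq_zero hc
  have hconst : f =ᶠ[𝓝 x₀] fun _ ↦ f x₀ := by
    filter_upwards [hmin, hmax] with x hx₁ hx₂ using le_antisymm hx₂ hx₁
  have hderiv : deriv f =ᶠ[𝓝 x₀] fun _ ↦ 0 := by
    filter_upwards [hconst.eventuallyEq_nhds] with x hx
    rw [hx.deriv_eq, deriv_const]
  rw [hderiv.deriv_eq, deriv_const] at hneg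
  exact lt_irrefl 0 hneg

theorem not_isLocalMin_of_deriv_deriv_add_deriv_neg {u : ℝ → ℝ} {c α β : ℝ} (hα : 0 ≤ α)
    (hL : α * deriv (deriv u) c + β * deriv u c < 0) (hc : ContinuousAt u c) :
    ¬IsLocalMin u c := by
  intro hmin
  rw [hmin.deriv_eq_zero, mul_zero, add_zero] at hL
  exact (mul_nonneg hα (hmin.deriv_deriv_nonneg hc)).not_gt hL

theorem pos_of_forall_not_isLocalMin {u : ℝ → ℝ} {a b : ℝ} (hu : ContinuousOn u (Icc a b))
    (hua : 0 ≤ u a) (hub : 0 ≤ u b) (hmin : ∀ c ∈ Ioo a b, ¬IsLocalMin u c) :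
    ∀ y ∈ Ioo a b, 0 < u y := by
  intro y hy
  by_contra! hy_nonpos
  obtain ⟨c, hc, hc_min⟩ :=
    isCompact_Icc.exists_isMinOn (nonempty_of_mem (Ioo_subset_Icc_self hy)) hu
  have hIcc_nhds : ∀ x ∈ Ioo a b, Icc a b ∈ 𝓝 x := fun x hx ↦ Icc_mem_nhds hx.1 hx.2
  by_cases hc_int : c ∈ Ioo a b
  · exact hmin c hc_int (hc_min.isLocalMin (hIcc_nhds c hc_int))
  · have hc_nonneg : 0 ≤ u c := by
      rcases eq_endpoints_or_mem_Ioo_of_mem_Icc hc with rfl | rfl | h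
      exacts [hua, hub, absurd h hc_int]
    have hy_min : IsMinOn u (Icc a b) y := fun x hx ↦
      (hy_nonpos.trans hc_nonneg).trans (hc_min hx)
    exact hmin y hy (hy_min.isLocalMin (hIcc_nhds y hy))

theorem mean_fpt_solution_positive_general (a b σ θ : ℝ)
    (u : ℝ → ℝ) (hC2 : ContDiffOn ℝ 2 u (Set.Icc a b))
    (hODE : ∀ y ∈ Set.Ioo a b,
      (1 / 2) * σ ^ 2 * deriv (deriv u) y - θ * y * deriv u y = -1)
    (hua : u a = 0) (hub : u b = 0) :
    ∀ y ∈ Set.Ioo a b, 0 < u y := by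
  have hu : ContinuousOn u (Icc a b) := hC2.continuousOn
  refine pos_of_forall_not_isLocalMin hu hua.ge hub.ge fun c hc ↦ ?_
  have hL : (1 / 2) * σ ^ 2 * deriv (deriv u) c + (-(θ * c)) * deriv u c < 0 := by
    linarith [hODE c hc]
  exact not_isLocalMin_of_deriv_deriv_add_deriv_neg (by positivity) hL
    (hu.continuousAt (Icc_mem_nhds hc.1 hc.2))

/-- if `u` is `C²` on `[a,b]` and solves
`(1/2)σ² u''(y) − θ y u'(y) = −1` on `(a,b)` with `u(a) = u(b) = 0`
(`a < b`, `σ > 0`, `θ > 0`), then `u(y) > 0` for all `y ∈ (a,b)`. -/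
theorem mean_fpt_solution_positive (a b σ θ : ℝ) (hab : a < b) (hσ : 0 < σ) (hθ : 0 < θ)
    (u : ℝ → ℝ) (hC2 : ContDiffOn ℝ 2 u (Set.Icc a b))
    (hODE : ∀ y ∈ Set.Ioo a b,
      (1 / 2) * σ ^ 2 * deriv (deriv u) y - θ * y * deriv u y = -1)
    (hua : u a = 0) (hub : u b = 0) :
    ∀ y ∈ Set.Ioo a b, 0 < u y :=
  mean_fpt_solution_positive_general a b σ θ u hC2 hODE hua hub
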